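/- Let ρ : ℝ² → [0,∞) be measurable with ‖ρ‖_{L¹} ≤ 1 and ρ(x) ≤ H + ln_−|x−ξ| for some H ≥ 1, ξ ∈ ℝ². Then the field E(x) = ∫ ρ(y)(x−y)/|x−y|² dy satisfies, for all x, y ∈ ℝ² with d = |x−y| ≤ 1/3, |E(x) − E(y)| ≤ C d (1 + ln_− d)(H + ln_− d) for a constant C independent of x, y, ξ, H. -/

import Mathlib

open MeasureTheory

noncomputable def lnm (r : ℝ) : ℝ := max (-Real.log r) 0

/-
Write `E(x) = ∫ ρ(z) K(x - z) dz` with `K(v) = v / ‖v‖²` and put `d = ‖x - y‖`. Where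
`‖z - x‖ ≤ 2d` the two kernels are bounded separately by `1 / ‖z - x‖` and `1 / ‖z - y‖`;
elsewhere `K` is the inversion in the unit sphere, so `‖K(x - z) - K(y - z)‖ ≤ 2d / ‖z - x‖²`,
and beyond distance `1` this is at most `2d`, which the mass bound `∫ ρ ≤ 1` absorbs.
The remaining kernels are decreasing radial profiles `k`, and against those the weight
`H + ln_-‖z - ξ‖` can be recentred at the singularity of `k`, because
`ln_-‖z - ξ‖ k(‖z - x‖) ≤ ln_-‖z - x‖ k(‖z - x‖) + ln_-‖z - ξ‖ k(‖z - ξ‖)`.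
What is left are the radial integrals `∫₀^R ln_- r dr = R (1 + ln_- R)` near the singularity
and `∫_{2d}^1 dr / r = ln_-(2d)` away from it.
-/

open Set Real

local notation "ℝ²" => EuclideanSpace ℝ (Fin 2)

lemma lnm_nonneg (r : ℝ) : 0 ≤ lnm r := le_max_right _ _

lemma lnm_of_le_one {r : ℝ} (h0 : 0 ≤ r) (h1 : r ≤ 1) : lnm r = -log r :=
  max_eq_left (neg_nonneg.2 (log_nonpos h0 h1))

lemma lnm_antitoneOn : AntitoneOn lnm (Ioi 0) := fun _ ha _ _ hab =>
  max_le_max (neg_le_neg (log_le_log ha hab)) le_rfl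

lemma measurable_lnm : Measurable lnm := measurable_log.neg.max measurable_const

lemma mul_le_add_mul_of_antitoneOn {α : Type*} [LinearOrder α] {S : Set α} {f g : α → ℝ}
    (hf : AntitoneOn f S) (hg : AntitoneOn g S) (hf0 : ∀ a, 0 ≤ f a) (hg0 : ∀ a, 0 ≤ g a)
    {a b : α} (ha : a ∈ S) (hb : b ∈ S) : f a * g b ≤ f b * g b + f a * g a := by
  have := mul_nonneg (hf0 a) (hg0 a)
  have := mul_nonneg (hf0 b) (hg0 b)
  rcases le_total a b with hab | hba
  · nlinarith [mul_le_mul_of_nonneg_left (hg ha hb hab) (hf0 a)]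
  · nlinarith [mul_le_mul_of_nonneg_right (hf hb ha hba) (hg0 b)]

noncomputable def nearProfile (R : ℝ) : ℝ → ℝ := (Ioc 0 R).indicator fun r => r⁻¹

/-- Majorant of `r⁻²` on `[s, 1]`, clamped below `s` so that it is decreasing on `(0, ∞)`. -/
noncomputable def farProfile (s : ℝ) : ℝ → ℝ := (Ioc 0 1).indicator fun r => (max r s ^ 2)⁻¹

lemma nearProfile_nonneg (R r : ℝ) : 0 ≤ nearProfile R r :=
  indicator_nonneg (fun _ hr => inv_nonneg.2 (mem_Ioc.1 hr).1.le) r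

lemma farProfile_nonneg (s r : ℝ) : 0 ≤ farProfile s r :=
  indicator_nonneg (fun _ _ => by positivity) r

lemma nearProfile_of_le {R r : ℝ} (h0 : 0 ≤ r) (h : r ≤ R) : nearProfile R r = r⁻¹ := by
  rcases h0.eq_or_lt with rfl | h0
  · simp [nearProfile]
  · exact indicator_of_mem (show r ∈ Ioc 0 R from ⟨h0, h⟩) _

lemma farProfile_of_le {s r : ℝ} (hs : s ≤ r) (h0 : 0 < r) (h1 : r ≤ 1) :
    farProfile s r = (r ^ 2)⁻¹ := by
  rw [farProfile, indicator_of_mem (show r ∈ Ioc 0 1 from ⟨h0, h1⟩), max_eq_left hs]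

lemma antitoneOn_nearProfile (R : ℝ) : AntitoneOn (nearProfile R) (Ioi 0) := by
  intro a ha b hb hab
  by_cases hbR : b ≤ R
  · rw [nearProfile_of_le (le_of_lt hb) hbR, nearProfile_of_le (le_of_lt ha) (hab.trans hbR)]
    exact inv_anti₀ ha hab
  · rw [nearProfile, indicator_of_notMem fun h => hbR h.2]
    exact nearProfile_nonneg R a

lemma antitoneOn_farProfile {s : ℝ} (hs : 0 < s) : AntitoneOn (farProfile s) (Ioi 0) := by
  intro a ha b hb hab
  by_cases hb1 : b ≤ 1
  · rw [farProfile, indicator_of_mem (show b ∈ Ioc 0 1 from ⟨hb, hb1⟩),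
      indicator_of_mem (show a ∈ Ioc 0 1 from ⟨ha, hab.trans hb1⟩)]
    gcongr
  · rw [farProfile, indicator_of_notMem fun h => hb1 h.2]
    exact farProfile_nonneg s a

section CoulombKernel

variable {E : Type*} [NormedAddCommGroup E] [InnerProductSpace ℝ E]

noncomputable def coulombKernel (v : E) : E := (‖v‖ ^ 2)⁻¹ • v

lemma div_norm_sq_smul_eq_smul_coulombKernel (c : ℝ) (v : E) :
    (c / ‖v‖ ^ 2) • v = c • coulombKernel v := by
  rw [coulombKernel, smul_smul, div_eq_mul_inv]

lemma measurable_coulombKernel [MeasurableSpace E] [BorelSpace E] :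
    Measurable (coulombKernel : E → E) :=
  (measurable_norm.pow_const 2).inv.smul measurable_id

lemma norm_coulombKernel (v : E) : ‖coulombKernel v‖ = ‖v‖⁻¹ := by
  rcases eq_or_ne v 0 with rfl | hv
  · simp [coulombKernel]
  · rw [coulombKernel, norm_smul, norm_inv, norm_pow, norm_norm]
    field_simp [norm_ne_zero_iff.2 hv]

lemma norm_coulombKernel_le (v : E) : ‖coulombKernel v‖ ≤ nearProfile 1 ‖v‖ + 1 := by
  rw [norm_coulombKernel]
  rcases le_total ‖v‖ 1 with h | h
  · rw [nearProfile_of_le (norm_nonneg v) h]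
    linarith
  · linarith [inv_le_one_of_one_le₀ h, nearProfile_nonneg 1 ‖v‖]

/-- `coulombKernel` is the inversion in the unit sphere. -/
lemma norm_coulombKernel_sub {v w : E} (hv : v ≠ 0) (hw : w ≠ 0) :
    ‖coulombKernel v - coulombKernel w‖ = ‖v - w‖ / (‖v‖ * ‖w‖) := by
  have h := dist_div_norm_sq_smul hv hw 1
  simp only [one_div, inv_pow, one_pow] at h
  rw [← dist_eq_norm, coulombKernel, coulombKernel, h, dist_eq_norm, inv_mul_eq_div]

lemma norm_coulombKernel_sub_le {v w : E} (hv : v ≠ 0) (h : 2 * ‖v - w‖ ≤ ‖v‖) :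
    ‖coulombKernel v - coulombKernel w‖ ≤ 2 * ‖v - w‖ / ‖v‖ ^ 2 := by
  have hv0 : 0 < ‖v‖ := norm_pos_iff.2 hv
  have hw : ‖v‖ ≤ 2 * ‖w‖ := by linarith [norm_sub_norm_le v w]
  have hw0 : w ≠ 0 := norm_pos_iff.1 (by linarith)
  rw [norm_coulombKernel_sub hv hw0, div_le_div_iff₀ (by positivity) (by positivity)]
  nlinarith [mul_nonneg (mul_nonneg (norm_nonneg (v - w)) hv0.le) (sub_nonneg.2 hw)]

lemma norm_coulombKernel_sub_le_profiles (v w : E) :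
    ‖coulombKernel v - coulombKernel w‖ ≤
      nearProfile (2 * ‖v - w‖) ‖v‖ + nearProfile (3 * ‖v - w‖) ‖w‖ +
        2 * ‖v - w‖ * (farProfile (2 * ‖v - w‖) ‖v‖ + 1) := by
  set d := ‖v - w‖
  have hfar : 0 ≤ 2 * d * (farProfile (2 * d) ‖v‖ + 1) := by
    have := farProfile_nonneg (2 * d) ‖v‖
    positivity
  by_cases hnear : ‖v‖ ≤ 2 * d
  · have hw : ‖w‖ ≤ 3 * d := by linarith [norm_sub_norm_le w v, norm_sub_rev v w]
    calc ‖coulombKernel v - coulombKernel w‖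
        ≤ ‖coulombKernel v‖ + ‖coulombKernel w‖ := norm_sub_le _ _
      _ = nearProfile (2 * d) ‖v‖ + nearProfile (3 * d) ‖w‖ := by
        rw [norm_coulombKernel, norm_coulombKernel, nearProfile_of_le (norm_nonneg v) hnear,
          nearProfile_of_le (norm_nonneg w) hw]
      _ ≤ _ := le_add_of_nonneg_right hfar
  push Not at hnear
  have hv0 : 0 < ‖v‖ := lt_of_le_of_lt (by positivity) hnear
  have hdiff := norm_coulombKernel_sub_le (norm_pos_iff.1 hv0) hnear.le
  have hfar' : 2 * d / ‖v‖ ^ 2 ≤ 2 * d * (farProfile (2 * d) ‖v‖ + 1) := by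
    rcases le_total ‖v‖ 1 with h1 | h1
    · rw [farProfile_of_le hnear.le hv0 h1, div_eq_mul_inv]
      linarith [norm_nonneg (v - w)]
    · calc 2 * d / ‖v‖ ^ 2 ≤ 2 * d := div_le_self (by positivity) (one_le_pow₀ h1)
        _ ≤ _ := le_mul_of_one_le_right (by positivity)
            (le_add_of_nonneg_left (farProfile_nonneg _ _))
  linarith [nearProfile_nonneg (2 * d) ‖v‖, nearProfile_nonneg (3 * d) ‖w‖]

end CoulombKernel

lemma intervalIntegrable_lnm (a b : ℝ) : IntervalIntegrable lnm volume a b :=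
  (intervalIntegral.intervalIntegrable_log' (a := a) (b := b)).neg.mono_fun
    measurable_lnm.aestronglyMeasurable <| ae_of_all _ fun r => by
      simp only [Pi.neg_apply, norm_of_nonneg (lnm_nonneg r)]
      exact max_le (le_abs_self _) (norm_nonneg _)

lemma integral_lnm {R : ℝ} (hR0 : 0 ≤ R) (hR1 : R ≤ 1) :
    ∫ r in (0)..R, lnm r = R * (1 + lnm R) := by
  have h : EqOn lnm (fun r => -log r) (uIcc 0 R) := fun r hr => by
    rw [uIcc_of_le hR0] at hr
    exact lnm_of_le_one hr.1 (hr.2.trans hR1)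
  rw [intervalIntegral.integral_congr h, intervalIntegral.integral_neg, integral_log,
    lnm_of_le_one hR0 hR1]
  ring

lemma integral_mul_lnm_le {s : ℝ} (hs0 : 0 ≤ s) (hs1 : s ≤ 1) :
    ∫ r in (0)..s, r * lnm r ≤ s ^ 2 * (1 + lnm s) :=
  calc ∫ r in (0)..s, r * lnm r ≤ ∫ r in (0)..s, s * lnm r :=
        intervalIntegral.integral_mono_on hs0
          ((intervalIntegrable_lnm 0 s).continuousOn_mul continuousOn_id)
          ((intervalIntegrable_lnm 0 s).const_mul s)
          fun r hr => mul_le_mul_of_nonneg_right hr.2 (lnm_nonneg r)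
    _ = s ^ 2 * (1 + lnm s) := by
      rw [intervalIntegral.integral_const_mul, integral_lnm hs0 hs1]
      ring

lemma integral_lnm_mul_inv_le {s : ℝ} (hs : 0 < s) (hs1 : s ≤ 1) :
    ∫ r in s..1, lnm r * r⁻¹ ≤ lnm s ^ 2 := by
  have hinv : ContinuousOn (fun r : ℝ => r⁻¹) (uIcc s 1) := continuousOn_inv₀.mono fun r hr =>
    (hs.trans_le (uIcc_of_le hs1 ▸ hr).1).ne'
  calc ∫ r in s..1, lnm r * r⁻¹ ≤ ∫ r in s..1, lnm s * r⁻¹ :=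
        intervalIntegral.integral_mono_on hs1 ((intervalIntegrable_lnm s 1).mul_continuousOn hinv)
          (hinv.intervalIntegrable.const_mul _) fun r hr =>
            mul_le_mul_of_nonneg_right (lnm_antitoneOn hs (hs.trans_le hr.1) hr.1)
              (inv_nonneg.2 (hs.le.trans hr.1))
    _ = lnm s ^ 2 := by
      rw [intervalIntegral.integral_const_mul, integral_inv_of_pos hs one_pos,
        lnm_of_le_one hs.le hs1, one_div, log_inv]
      ring

lemma continuous_mul_inv_max_sq {s : ℝ} (hs : 0 < s) :
    Continuous fun r : ℝ => r * (max r s ^ 2)⁻¹ :=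
  continuous_id.mul <| ((continuous_id.max continuous_const).pow 2).inv₀ fun _ =>
    (pow_pos (lt_max_of_lt_right hs) 2).ne'

lemma intervalIntegrable_mul_lnm_mul_inv_max_sq {s : ℝ} (hs : 0 < s) (a b : ℝ) :
    IntervalIntegrable (fun r => r * (lnm r * (max r s ^ 2)⁻¹)) volume a b := by
  refine ((intervalIntegrable_lnm a b).mul_continuousOn
    (continuous_mul_inv_max_sq hs).continuousOn).congr fun r _ => ?_
  ring

lemma mul_indicator_eq_indicator_mul (S : Set ℝ) (f g : ℝ → ℝ) :
    (fun r => f r * S.indicator g r) = S.indicator fun r => f r * g r :=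
  funext fun _ => (indicator_mul_right _ f g).symm

lemma integral_norm_fin_two (f : ℝ → ℝ) : ∫ z : ℝ², f ‖z‖ = 2 * π * ∫ r in Ioi 0, r * f r := by
  rw [integral_fun_norm_addHaar volume f, finrank_euclideanSpace_fin, measureReal_def,
    EuclideanSpace.volume_ball_fin_two]
  simp [smul_eq_mul, mul_assoc, pi_nonneg]

lemma integrable_norm_fin_two_iff {f : ℝ → ℝ} :
    Integrable (fun z : ℝ² => f ‖z‖) ↔ IntegrableOn (fun r => r * f r) (Ioi 0) := by
  rw [integrable_fun_norm_addHaar volume, finrank_euclideanSpace_fin]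
  simp [smul_eq_mul]

lemma integral_indicator_Ioc_norm (R : ℝ) (g : ℝ → ℝ) :
    ∫ z : ℝ², (Ioc 0 R).indicator g ‖z‖ = 2 * π * ∫ r in Ioc 0 R, r * g r := by
  rw [integral_norm_fin_two, mul_indicator_eq_indicator_mul _ (fun r => r),
    setIntegral_indicator measurableSet_Ioc, inter_eq_right.2 Ioc_subset_Ioi_self]

lemma integrable_indicator_Ioc_norm_iff {R : ℝ} {g : ℝ → ℝ} :
    Integrable (fun z : ℝ² => (Ioc 0 R).indicator g ‖z‖) ↔
      IntegrableOn (fun r => r * g r) (Ioc 0 R) := by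
  rw [integrable_norm_fin_two_iff, mul_indicator_eq_indicator_mul _ (fun r => r), IntegrableOn,
    integrable_indicator_iff measurableSet_Ioc, IntegrableOn,
    Measure.restrict_restrict measurableSet_Ioc, inter_eq_left.2 Ioc_subset_Ioi_self, IntegrableOn]

lemma integrable_nearProfile_norm (R : ℝ) : Integrable fun z : ℝ² => nearProfile R ‖z‖ :=
  integrable_indicator_Ioc_norm_iff.2 <|
    (integrableOn_const (C := (1 : ℝ)) measure_Ioc_lt_top.ne).congr_fun
      (fun _ hr => (mul_inv_cancel₀ (mem_Ioc.1 hr).1.ne').symm) measurableSet_Ioc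

lemma integral_nearProfile_norm {R : ℝ} (hR : 0 ≤ R) :
    ∫ z : ℝ², nearProfile R ‖z‖ = 2 * π * R := by
  rw [nearProfile, integral_indicator_Ioc_norm,
    setIntegral_congr_fun measurableSet_Ioc fun r hr => mul_inv_cancel₀ (mem_Ioc.1 hr).1.ne']
  simp [hR]

lemma mul_lnm_mul_inv {r : ℝ} (hr : 0 < r) : r * (lnm r * r⁻¹) = lnm r := by
  field_simp

lemma integrable_lnm_mul_nearProfile_norm (R : ℝ) :
    Integrable fun z : ℝ² => lnm ‖z‖ * nearProfile R ‖z‖ := by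
  simp_rw [nearProfile, ← indicator_mul_right _ lnm]
  exact integrable_indicator_Ioc_norm_iff.2 <| (intervalIntegrable_lnm 0 R).1.congr_fun
    (fun r hr => (mul_lnm_mul_inv (mem_Ioc.1 hr).1).symm) measurableSet_Ioc

lemma integral_lnm_mul_nearProfile_norm {R : ℝ} (hR0 : 0 ≤ R) (hR1 : R ≤ 1) :
    ∫ z : ℝ², lnm ‖z‖ * nearProfile R ‖z‖ = 2 * π * (R * (1 + lnm R)) := by
  simp_rw [nearProfile, ← indicator_mul_right _ lnm]
  rw [integral_indicator_Ioc_norm,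
    setIntegral_congr_fun measurableSet_Ioc fun r hr => mul_lnm_mul_inv (mem_Ioc.1 hr).1,
    ← intervalIntegral.integral_of_le hR0, integral_lnm hR0 hR1]

lemma integrable_farProfile_norm {s : ℝ} (hs : 0 < s) :
    Integrable fun z : ℝ² => farProfile s ‖z‖ :=
  integrable_indicator_Ioc_norm_iff.2 (continuous_mul_inv_max_sq hs).integrableOn_Ioc

lemma integral_farProfile_norm {s : ℝ} (hs : 0 < s) (hs1 : s ≤ 1) :
    ∫ z : ℝ², farProfile s ‖z‖ = 2 * π * (1 / 2 + lnm s) := by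
  have hint (a b : ℝ) : IntervalIntegrable (fun r : ℝ => r * (max r s ^ 2)⁻¹) volume a b :=
    (continuous_mul_inv_max_sq hs).intervalIntegrable a b
  have hdisc : ∫ r in (0)..s, r * (max r s ^ 2)⁻¹ = 1 / 2 := by
    rw [intervalIntegral.integral_congr (g := fun r => r * (s ^ 2)⁻¹) fun r hr => by
        rw [uIcc_of_le hs.le] at hr
        simp [max_eq_right hr.2],
      intervalIntegral.integral_mul_const, integral_id]
    field_simp
    ring
  have hann : ∫ r in s..1, r * (max r s ^ 2)⁻¹ = lnm s := by
    rw [intervalIntegral.integral_congr (g := fun r => r⁻¹) fun r hr => by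
        rw [uIcc_of_le hs1] at hr
        have : 0 < r := hs.trans_le hr.1
        simp only [max_eq_left hr.1]
        field_simp,
      integral_inv_of_pos hs one_pos, lnm_of_le_one hs.le hs1, one_div, log_inv]
  rw [farProfile, integral_indicator_Ioc_norm, ← intervalIntegral.integral_of_le zero_le_one,
    ← intervalIntegral.integral_add_adjacent_intervals (hint 0 s) (hint s 1), hdisc, hann]

lemma integrable_lnm_mul_farProfile_norm {s : ℝ} (hs : 0 < s) :
    Integrable fun z : ℝ² => lnm ‖z‖ * farProfile s ‖z‖ := by
  simp_rw [farProfile, ← indicator_mul_right _ lnm]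
  exact integrable_indicator_Ioc_norm_iff.2 (intervalIntegrable_mul_lnm_mul_inv_max_sq hs 0 1).1

lemma integral_lnm_mul_farProfile_norm_le {s : ℝ} (hs : 0 < s) (hs1 : s ≤ 1) :
    ∫ z : ℝ², lnm ‖z‖ * farProfile s ‖z‖ ≤ 2 * π * (1 + lnm s + lnm s ^ 2) := by
  have hint := intervalIntegrable_mul_lnm_mul_inv_max_sq hs
  have hdisc : ∫ r in (0)..s, r * (lnm r * (max r s ^ 2)⁻¹) =
      (∫ r in (0)..s, r * lnm r) * (s ^ 2)⁻¹ := by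
    rw [← intervalIntegral.integral_mul_const]
    refine intervalIntegral.integral_congr fun r hr => ?_
    rw [uIcc_of_le hs.le] at hr
    simp only [max_eq_right hr.2]
    ring
  have hann : ∫ r in s..1, r * (lnm r * (max r s ^ 2)⁻¹) = ∫ r in s..1, lnm r * r⁻¹ := by
    refine intervalIntegral.integral_congr fun r hr => ?_
    rw [uIcc_of_le hs1] at hr
    have : 0 < r := hs.trans_le hr.1
    simp only [max_eq_left hr.1]
    field_simp
  have hdisc_le : (∫ r in (0)..s, r * lnm r) * (s ^ 2)⁻¹ ≤ 1 + lnm s := by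
    rw [← div_eq_mul_inv, div_le_iff₀ (by positivity)]
    exact (integral_mul_lnm_le hs.le hs1).trans_eq (mul_comm _ _)
  simp_rw [farProfile, ← indicator_mul_right _ lnm]
  rw [integral_indicator_Ioc_norm, ← intervalIntegral.integral_of_le zero_le_one,
    ← intervalIntegral.integral_add_adjacent_intervals (hint 0 s) (hint s 1), hdisc, hann]
  nlinarith [pi_pos, integral_lnm_mul_inv_le hs hs1]

section WeightedProfile

variable {E : Type*} [NormedAddCommGroup E] [MeasurableSpace E] {μ : Measure E}
  {ρ : E → ℝ} {H : ℝ} {ξ : E} {k : ℝ → ℝ}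

lemma ae_mul_profile_le [NullSingletonClass μ] (hρ : ∀ z, ρ z ≤ H + lnm ‖z - ξ‖)
    (hk : AntitoneOn k (Ioi 0)) (hk0 : ∀ r, 0 ≤ k r) (a : E) :
    ∀ᵐ z ∂μ, ρ z * k ‖z - a‖ ≤
      H * k ‖z - a‖ + lnm ‖z - a‖ * k ‖z - a‖ + lnm ‖z - ξ‖ * k ‖z - ξ‖ := by
  filter_upwards [μ.ae_ne a, μ.ae_ne ξ] with z hza hzξ
  have := mul_le_add_mul_of_antitoneOn lnm_antitoneOn hk lnm_nonneg hk0
    (norm_sub_pos_iff.2 hzξ) (norm_sub_pos_iff.2 hza)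
  nlinarith [mul_le_mul_of_nonneg_right (hρ z) (hk0 ‖z - a‖)]

variable [MeasurableAdd E] [μ.IsAddRightInvariant]

lemma integrable_profile_majorant (hk_int : Integrable (fun z => k ‖z‖) μ)
    (hlk_int : Integrable (fun z => lnm ‖z‖ * k ‖z‖) μ) (H : ℝ) (ξ a : E) :
    Integrable (fun z => H * k ‖z - a‖ + lnm ‖z - a‖ * k ‖z - a‖ +
      lnm ‖z - ξ‖ * k ‖z - ξ‖) μ :=
  (((hk_int.comp_sub_right a).const_mul H).add (hlk_int.comp_sub_right a)).add
    (hlk_int.comp_sub_right ξ)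

lemma integral_profile_majorant (hk_int : Integrable (fun z => k ‖z‖) μ)
    (hlk_int : Integrable (fun z => lnm ‖z‖ * k ‖z‖) μ) (H : ℝ) (ξ a : E) :
    ∫ z, H * k ‖z - a‖ + lnm ‖z - a‖ * k ‖z - a‖ + lnm ‖z - ξ‖ * k ‖z - ξ‖ ∂μ =
      H * ∫ z, k ‖z‖ ∂μ + 2 * ∫ z, lnm ‖z‖ * k ‖z‖ ∂μ := by
  have h₁ : Integrable (fun z => H * k ‖z - a‖) μ := (hk_int.comp_sub_right a).const_mul H
  have h₂ : Integrable (fun z => lnm ‖z - a‖ * k ‖z - a‖) μ := hlk_int.comp_sub_right a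
  have h₁₂ : Integrable (fun z => H * k ‖z - a‖ + lnm ‖z - a‖ * k ‖z - a‖) μ := h₁.add h₂
  rw [integral_add h₁₂ (hlk_int.comp_sub_right ξ), integral_add h₁ h₂, integral_const_mul,
    integral_sub_right_eq_self (fun z => k ‖z‖),
    integral_sub_right_eq_self (fun z => lnm ‖z‖ * k ‖z‖),
    integral_sub_right_eq_self (fun z => lnm ‖z‖ * k ‖z‖)]
  ring

variable [NullSingletonClass μ]

lemma integrable_mul_profile (hk_int : Integrable (fun z => k ‖z‖) μ)
    (hlk_int : Integrable (fun z => lnm ‖z‖ * k ‖z‖) μ) (hk : AntitoneOn k (Ioi 0))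
    (hk0 : ∀ r, 0 ≤ k r) (hρm : AEStronglyMeasurable ρ μ) (hρ0 : ∀ z, 0 ≤ ρ z)
    (hρ : ∀ z, ρ z ≤ H + lnm ‖z - ξ‖) (a : E) :
    Integrable (fun z => ρ z * k ‖z - a‖) μ := by
  refine (integrable_profile_majorant hk_int hlk_int H ξ a).mono'
    (hρm.mul (hk_int.comp_sub_right a).aestronglyMeasurable) ?_
  filter_upwards [ae_mul_profile_le hρ hk hk0 a] with z hz
  rwa [norm_of_nonneg (mul_nonneg (hρ0 z) (hk0 _))]

lemma integral_mul_profile_le (hk_int : Integrable (fun z => k ‖z‖) μ)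
    (hlk_int : Integrable (fun z => lnm ‖z‖ * k ‖z‖) μ) (hk : AntitoneOn k (Ioi 0))
    (hk0 : ∀ r, 0 ≤ k r) (hρ : ∀ z, ρ z ≤ H + lnm ‖z - ξ‖) {a : E}
    (hint : Integrable (fun z => ρ z * k ‖z - a‖) μ) :
    ∫ z, ρ z * k ‖z - a‖ ∂μ ≤ H * ∫ z, k ‖z‖ ∂μ + 2 * ∫ z, lnm ‖z‖ * k ‖z‖ ∂μ :=
  (integral_mono_ae hint (integrable_profile_majorant hk_int hlk_int H ξ a)
    (ae_mul_profile_le hρ hk hk0 a)).trans_eq (integral_profile_majorant hk_int hlk_int H ξ a)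

end WeightedProfile

section Field

variable {ρ : ℝ² → ℝ} {H : ℝ} {ξ : ℝ²}

lemma integrable_mul_nearProfile (hρm : Measurable ρ) (hρ0 : ∀ z, 0 ≤ ρ z)
    (hρ : ∀ z, ρ z ≤ H + lnm ‖z - ξ‖) (R : ℝ) (a : ℝ²) :
    Integrable fun z => ρ z * nearProfile R ‖z - a‖ :=
  integrable_mul_profile (integrable_nearProfile_norm R) (integrable_lnm_mul_nearProfile_norm R)
    (antitoneOn_nearProfile R) (nearProfile_nonneg R) hρm.aestronglyMeasurable hρ0 hρ a

lemma integral_mul_nearProfile_le (hρm : Measurable ρ) (hρ0 : ∀ z, 0 ≤ ρ z)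
    (hρ : ∀ z, ρ z ≤ H + lnm ‖z - ξ‖) {R : ℝ} (hR0 : 0 ≤ R) (hR1 : R ≤ 1) (a : ℝ²) :
    ∫ z, ρ z * nearProfile R ‖z - a‖ ≤ 2 * π * (H * R + 2 * (R * (1 + lnm R))) := by
  refine (integral_mul_profile_le (integrable_nearProfile_norm R)
    (integrable_lnm_mul_nearProfile_norm R) (antitoneOn_nearProfile R) (nearProfile_nonneg R) hρ
    (integrable_mul_nearProfile hρm hρ0 hρ R a)).trans_eq ?_
  rw [integral_nearProfile_norm hR0, integral_lnm_mul_nearProfile_norm hR0 hR1]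
  ring

lemma integrable_mul_farProfile (hρm : Measurable ρ) (hρ0 : ∀ z, 0 ≤ ρ z)
    (hρ : ∀ z, ρ z ≤ H + lnm ‖z - ξ‖) {s : ℝ} (hs : 0 < s) (a : ℝ²) :
    Integrable fun z => ρ z * farProfile s ‖z - a‖ :=
  integrable_mul_profile (integrable_farProfile_norm hs) (integrable_lnm_mul_farProfile_norm hs)
    (antitoneOn_farProfile hs) (farProfile_nonneg s) hρm.aestronglyMeasurable hρ0 hρ a

lemma integral_mul_farProfile_le (hρm : Measurable ρ) (hρ0 : ∀ z, 0 ≤ ρ z)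
    (hρ : ∀ z, ρ z ≤ H + lnm ‖z - ξ‖) {s : ℝ} (hs : 0 < s) (hs1 : s ≤ 1) (a : ℝ²) :
    ∫ z, ρ z * farProfile s ‖z - a‖ ≤
      2 * π * (H * (1 / 2 + lnm s) + 2 * (1 + lnm s + lnm s ^ 2)) := by
  refine (integral_mul_profile_le (integrable_farProfile_norm hs)
    (integrable_lnm_mul_farProfile_norm hs) (antitoneOn_farProfile hs) (farProfile_nonneg s) hρ
    (integrable_mul_farProfile hρm hρ0 hρ hs a)).trans ?_
  rw [integral_farProfile_norm hs hs1]
  nlinarith [integral_lnm_mul_farProfile_norm_le hs hs1, pi_pos]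

lemma integrable_smul_coulombKernel (hρm : Measurable ρ) (hρ0 : ∀ z, 0 ≤ ρ z)
    (hρ : ∀ z, ρ z ≤ H + lnm ‖z - ξ‖) (hρint : Integrable ρ) (x : ℝ²) :
    Integrable fun z => ρ z • coulombKernel (x - z) := by
  refine ((integrable_mul_nearProfile hρm hρ0 hρ 1 x).add hρint).mono'
    (hρm.aestronglyMeasurable.smul
      (measurable_coulombKernel.comp (measurable_const.sub measurable_id)).aestronglyMeasurable)
    (ae_of_all _ fun z => ?_)
  have h := norm_coulombKernel_le (x - z)
  rw [norm_sub_rev x z] at h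
  rw [norm_smul, norm_of_nonneg (hρ0 z), Pi.add_apply]
  nlinarith [mul_le_mul_of_nonneg_left h (hρ0 z)]

lemma norm_integral_sub_integral_le (hρm : Measurable ρ) (hρ0 : ∀ z, 0 ≤ ρ z)
    (hρ : ∀ z, ρ z ≤ H + lnm ‖z - ξ‖) (hρint : Integrable ρ) {x y : ℝ²} (hxy : x ≠ y) :
    ‖(∫ z, ρ z • coulombKernel (x - z)) - ∫ z, ρ z • coulombKernel (y - z)‖ ≤
      (∫ z, ρ z * nearProfile (2 * ‖x - y‖) ‖z - x‖) +
        (∫ z, ρ z * nearProfile (3 * ‖x - y‖) ‖z - y‖) +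
        2 * ‖x - y‖ * ((∫ z, ρ z * farProfile (2 * ‖x - y‖) ‖z - x‖) + ∫ z, ρ z) := by
  set d := ‖x - y‖
  have hd : 0 < d := norm_sub_pos_iff.2 hxy
  have h₁ := integrable_mul_nearProfile hρm hρ0 hρ (2 * d) x
  have h₂ := integrable_mul_nearProfile hρm hρ0 hρ (3 * d) y
  have h₃ := integrable_mul_farProfile hρm hρ0 hρ (by positivity : 0 < 2 * d) x
  have h₁₂ : Integrable fun z =>
      ρ z * nearProfile (2 * d) ‖z - x‖ + ρ z * nearProfile (3 * d) ‖z - y‖ := h₁.add h₂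
  have h₃₄ : Integrable fun z => ρ z * farProfile (2 * d) ‖z - x‖ + ρ z := h₃.add hρint
  have hM : Integrable fun z =>
      ρ z * nearProfile (2 * d) ‖z - x‖ + ρ z * nearProfile (3 * d) ‖z - y‖ +
        2 * d * (ρ z * farProfile (2 * d) ‖z - x‖ + ρ z) := h₁₂.add (h₃₄.const_mul _)
  have hle (z : ℝ²) :
      ‖ρ z • coulombKernel (x - z) - ρ z • coulombKernel (y - z)‖ ≤
        ρ z * nearProfile (2 * d) ‖z - x‖ + ρ z * nearProfile (3 * d) ‖z - y‖ +
          2 * d * (ρ z * farProfile (2 * d) ‖z - x‖ + ρ z) := by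
    have h := norm_coulombKernel_sub_le_profiles (x - z) (y - z)
    rw [sub_sub_sub_cancel_right, norm_sub_rev x z, norm_sub_rev y z] at h
    rw [← smul_sub, norm_smul, norm_of_nonneg (hρ0 z)]
    nlinarith [mul_le_mul_of_nonneg_left h (hρ0 z)]
  rw [← integral_sub (integrable_smul_coulombKernel hρm hρ0 hρ hρint x)
    (integrable_smul_coulombKernel hρm hρ0 hρ hρint y)]
  refine (norm_integral_le_of_norm_le hM (ae_of_all _ hle)).trans_eq ?_
  rw [integral_add h₁₂ (h₃₄.const_mul _), integral_add h₁ h₂, integral_const_mul,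
    integral_add h₃ hρint]

end Field

lemma sum_field_bounds_le {d H L : ℝ} (hd : 0 ≤ d) (hH : 1 ≤ H) (hL : 0 ≤ L) :
    2 * π * (H * (2 * d) + 2 * (2 * d * (1 + L))) +
        2 * π * (H * (3 * d) + 2 * (3 * d * (1 + L))) +
        2 * d * (2 * π * (H * (1 / 2 + L) + 2 * (1 + L + L ^ 2)) + 1) ≤
      (40 * π + 2) * d * (1 + L) * (H + L) := by
  have hQ : 6 * H + 2 * (H * L) + 14 + 14 * L + 4 * L ^ 2 ≤ 20 * ((1 + L) * (H + L)) := by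
    nlinarith [mul_nonneg (sub_nonneg.2 hH) hL]
  have hP : 1 ≤ (1 + L) * (H + L) := by nlinarith
  calc _ = 2 * π * d * (6 * H + 2 * (H * L) + 14 + 14 * L + 4 * L ^ 2) + 2 * d * 1 := by ring
    _ ≤ 2 * π * d * (20 * ((1 + L) * (H + L))) + 2 * d * ((1 + L) * (H + L)) := by gcongr
    _ = _ := by ring

theorem field_quasi_lipschitz :
    ∃ C > 0, ∀ (ρ : EuclideanSpace ℝ (Fin 2) → ℝ) (H : ℝ)
      (ξ : EuclideanSpace ℝ (Fin 2)),
      1 ≤ H → Measurable ρ → (∀ x, 0 ≤ ρ x) → Integrable ρ →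
      (∫ x, ρ x) ≤ 1 → (∀ x, ρ x ≤ H + lnm ‖x - ξ‖) →
      ∀ x y : EuclideanSpace ℝ (Fin 2), ‖x - y‖ ≤ 1 / 3 →
        ‖(∫ z, (ρ z / ‖x - z‖ ^ 2) • (x - z)) -
            ∫ z, (ρ z / ‖y - z‖ ^ 2) • (y - z)‖ ≤
          C * ‖x - y‖ * (1 + lnm ‖x - y‖) * (H + lnm ‖x - y‖) := by
  refine ⟨40 * π + 2, by positivity, ?_⟩
  intro ρ H ξ hH hρm hρ0 hρint hmass hρ x y hxy
  simp_rw [div_norm_sq_smul_eq_smul_coulombKernel]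
  rcases eq_or_ne x y with rfl | hne
  · simp
  set d := ‖x - y‖
  have hd : 0 < d := norm_sub_pos_iff.2 hne
  have hL₂ : lnm (2 * d) ≤ lnm d := lnm_antitoneOn hd (mem_Ioi.2 (by positivity)) (by linarith)
  have hL₃ : lnm (3 * d) ≤ lnm d := lnm_antitoneOn hd (mem_Ioi.2 (by positivity)) (by linarith)
  have hnear₂ : ∫ z, ρ z * nearProfile (2 * d) ‖z - x‖ ≤
      2 * π * (H * (2 * d) + 2 * (2 * d * (1 + lnm d))) :=
    (integral_mul_nearProfile_le hρm hρ0 hρ (by positivity) (by linarith) x).trans (by gcongr)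
  have hnear₃ : ∫ z, ρ z * nearProfile (3 * d) ‖z - y‖ ≤
      2 * π * (H * (3 * d) + 2 * (3 * d * (1 + lnm d))) :=
    (integral_mul_nearProfile_le hρm hρ0 hρ (by positivity) (by linarith) y).trans (by gcongr)
  have hfar : ∫ z, ρ z * farProfile (2 * d) ‖z - x‖ ≤
      2 * π * (H * (1 / 2 + lnm d) + 2 * (1 + lnm d + lnm d ^ 2)) :=
    (integral_mul_farProfile_le hρm hρ0 hρ (by positivity) (by linarith) x).trans
      (by gcongr; exact lnm_nonneg _)
  calc _ ≤ _ := norm_integral_sub_integral_le hρm hρ0 hρ hρint hne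
    _ ≤ _ := by gcongr
    _ ≤ _ := sum_field_bounds_le hd.le hH (lnm_nonneg d)
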